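/- Let a, b, c be the tree automorphisms of the binary tree defined by the wreath recursions a = σ(a,c), b = σ(b,a), c = (c,c) (automaton number 2851; note c is the identity). Then the subsemigroup of the generated group G₂₈₅₁ generated by a and b is a free semigroup of rank 2: any two distinct finite nonempty words in the letters a and b represent distinct elements of G₂₈₅₁. In particular, G₂₈₅₁ has exponential growth. -/

import Mathlib

/-- An invertible automaton over the two-letter alphabet `Bool`:
a set of states `Q`, a transition map and an output map such that each state
acts on the alphabet by a permutation. -/
structure BinAutomaton (Q : Type*) where
  trans : Q → Bool → Q
  out : Q → Bool → Bool
  out_bij : ∀ q, Function.Bijective (out q)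

namespace BinAutomaton

variable {Q : Type*} (A : BinAutomaton Q)

/-- The action of a state on finite binary words:
`q(xw) = ρ(q,x) · (τ(q,x))(w)`. -/
def act : Q → List Bool → List Bool
  | _, [] => []
  | q, x :: w => A.out q x :: act (A.trans q x) w

theorem act_injective (q : Q) : Function.Injective (A.act q) := by
  intro u
  induction u generalizing q with
  | nil =>
    intro v h
    cases v with
    | nil => rfl
    | cons y v => simp [act] at h
  | cons x u ih =>
    intro v h
    cases v with
    | nil => simp [act] at h
    | cons y v =>
      simp only [act, List.cons.injEq] at h
      obtain ⟨h1, h2⟩ := h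
      obtain rfl : x = y := (A.out_bij q).1 h1
      rw [ih _ h2]

theorem act_surjective (q : Q) : Function.Surjective (A.act q) := by
  intro v
  induction v generalizing q with
  | nil => exact ⟨[], rfl⟩
  | cons y v ih =>
    obtain ⟨x, hx⟩ := (A.out_bij q).2 y
    obtain ⟨w, hw⟩ := ih (A.trans q x)
    exact ⟨x :: w, by simp [act, hx, hw]⟩

/-- The tree automorphism defined by the state `q`. -/
noncomputable def perm (q : Q) : Equiv.Perm (List Bool) :=
  Equiv.ofBijective (A.act q) ⟨A.act_injective q, A.act_surjective q⟩

/-- The group generated by the automaton: the subgroup of the group of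
bijections of the binary tree generated by the states. -/
noncomputable def autGroup : Subgroup (Equiv.Perm (List Bool)) :=
  Subgroup.closure (Set.range A.perm)

end BinAutomaton

/-- Helper constructing a 3-state automaton from the sections at `0`, the
sections at `1`, and the activity of each state. -/
def mkAut3 (t0 t1 : Fin 3 → Fin 3) (actv : Fin 3 → Bool) : BinAutomaton (Fin 3) where
  trans q x := cond x (t1 q) (t0 q)
  out q x := xor (actv q) x
  out_bij q := by
    have h : ∀ b : Bool, Function.Bijective fun x => xor b x := by decide
    exact h (actv q)

/-- Automaton number 2851:
`a = σ(a,c)`, `b = σ(b,a)`, `c = (c,c)` (states `0 = a`, `1 = b`, `2 = c`);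
note that `c` is the identity automorphism. -/
def A2851 : BinAutomaton (Fin 3) :=
  mkAut3 ![0, 1, 2] ![2, 0, 2] ![true, true, false]

noncomputable def a : Equiv.Perm (List Bool) := A2851.perm 0
noncomputable def b : Equiv.Perm (List Bool) := A2851.perm 1
noncomputable def c : Equiv.Perm (List Bool) := A2851.perm 2

/-!
Every generator is active, so a positive word `R` in `a, b` changes the first letter iff its
length is odd, and its sections at `0` and `1` are again positive words, which together determine
`R`. Equal elements have equal sections, and passing to sections strictly decreases
`length + #b` unless both words have length at most one; those are told apart by the parity of
the length and by `a ≠ b`. Hence distinct words give distinct elements, and the `2ⁿ` words of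
length `n` give `2ⁿ` elements of the ball of radius `n`.
-/

theorem Set.Finite.setOf_exists_prod_eq {M : Type*} [Monoid M] {S : Set M} (hS : S.Finite)
    (n : ℕ) : {g : M | ∃ L : List M, (∀ x ∈ L, x ∈ S) ∧ L.length ≤ n ∧ L.prod = g}.Finite := by
  have : Finite S := hS
  refine ((List.finite_length_le S n).image fun L => (L.map Subtype.val).prod).subset ?_
  rintro g ⟨L, hL, hlen, rfl⟩
  lift L to List S using hL
  exact ⟨L, by simpa using hlen, rfl⟩

namespace Aut2851

theorem c_apply (w : List Bool) : c w = w := by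
  induction w with
  | nil => rfl
  | cons x w ih => cases x <;> exact congrArg _ ih

theorem a_cons_false (w : List Bool) : a (false :: w) = true :: a w := rfl
theorem a_cons_true (w : List Bool) : a (true :: w) = false :: w := congrArg _ (c_apply w)
theorem b_cons_false (w : List Bool) : b (false :: w) = true :: b w := rfl
theorem b_cons_true (w : List Bool) : b (true :: w) = false :: a w := rfl

theorem a_ne_b : a ≠ b := fun h => by
  simpa [a_cons_true, b_cons_true, a_cons_false] using congrArg (· [true, false]) h

noncomputable def gen (x : Bool) : Equiv.Perm (List Bool) := cond x a b

theorem gen_injective : Function.Injective gen := by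
  intro x y h
  cases x <;> cases y <;> first | rfl | exact absurd h a_ne_b | exact absurd h.symm a_ne_b

/-- The element represented by a positive word in `a = gen true` and `b = gen false`, read as
a sequence of automorphisms applied from left to right. -/
noncomputable def wordPerm (R : List Bool) : Equiv.Perm (List Bool) := (R.reverse.map gen).prod

@[simp] theorem wordPerm_nil : wordPerm [] = 1 := rfl

@[simp] theorem wordPerm_singleton (x : Bool) : wordPerm [x] = gen x := by simp [wordPerm]

theorem wordPerm_cons (x : Bool) (R : List Bool) : wordPerm (x :: R) = wordPerm R * gen x := by
  simp [wordPerm]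

theorem wordPerm_reverse (R : List Bool) : wordPerm R.reverse = (R.map gen).prod := by
  simp [wordPerm]

theorem wordPerm_append (R S : List Bool) : wordPerm (R ++ S) = wordPerm S * wordPerm R := by
  simp [wordPerm]

/-- The section of a generator at the first letter `x`, as a positive word:
`a|₀ = a`, `a|₁ = c = 1`, `b|₀ = b`, `b|₁ = a`. -/
def genSection (x g : Bool) : List Bool := if x then (if g then [] else [true]) else [g]

/-- The section of a positive word at the first letter `x`; the first letter seen by successive
generators alternates because every generator is active. -/
def wordSection : Bool → List Bool → List Bool
  | _, [] => []
  | x, g :: R => genSection x g ++ wordSection (!x) R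

theorem gen_apply_cons (g x : Bool) (w : List Bool) :
    gen g (x :: w) = (!x) :: wordPerm (genSection x g) w := by
  cases g <;> cases x <;>
    simp [gen, genSection, a_cons_false, a_cons_true, b_cons_false, b_cons_true]

theorem wordPerm_apply_cons (R : List Bool) (x : Bool) (w : List Bool) :
    wordPerm R (x :: w) = xor R.length.bodd x :: wordPerm (wordSection x R) w := by
  induction R generalizing x w with
  | nil => simp [wordSection]
  | cons g R ih =>
    rw [wordPerm_cons, Equiv.Perm.mul_apply, gen_apply_cons, ih, wordSection, wordPerm_append,
      Equiv.Perm.mul_apply, List.length_cons, Nat.bodd_succ]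
    cases R.length.bodd <;> cases x <;> rfl

theorem bodd_length_eq_of_wordPerm_eq {R₁ R₂ : List Bool} (h : wordPerm R₁ = wordPerm R₂) :
    R₁.length.bodd = R₂.length.bodd :=
  (by simpa [wordPerm_apply_cons] using congrArg (· [false]) h : _ ∧ _).1

theorem wordPerm_wordSection_eq_of_wordPerm_eq {R₁ R₂ : List Bool}
    (h : wordPerm R₁ = wordPerm R₂) (x : Bool) :
    wordPerm (wordSection x R₁) = wordPerm (wordSection x R₂) := by
  ext w : 1
  exact (by simpa [wordPerm_apply_cons] using congrArg (· (x :: w)) h : _ ∧ _).2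

theorem eq_of_wordSection_eq {R₁ R₂ : List Bool}
    (h₀ : wordSection false R₁ = wordSection false R₂)
    (h₁ : wordSection true R₁ = wordSection true R₂) : R₁ = R₂ := by
  induction R₁ generalizing R₂ with
  | nil => cases R₂ <;> simp_all [wordSection, genSection]
  | cons g R₁ ih =>
    cases R₂ with
    | nil => simp [wordSection, genSection] at h₀
    | cons g' R₂ =>
      obtain ⟨rfl, h₁'⟩ : g = g' ∧ wordSection true R₁ = wordSection true R₂ := by
        simpa [wordSection, genSection] using h₀
      rw [ih (List.append_cancel_left h₁) h₁']

theorem eq_of_wordPerm_eq_of_length_le_one {R₁ R₂ : List Bool} (h₁ : R₁.length ≤ 1)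
    (h₂ : R₂.length ≤ 1) (h : wordPerm R₁ = wordPerm R₂) : R₁ = R₂ := by
  have hb := bodd_length_eq_of_wordPerm_eq h
  rcases R₁ with _ | ⟨x, _ | _⟩ <;> rcases R₂ with _ | ⟨y, _ | _⟩ <;>
    simp_all [gen_injective.eq_iff]

-- Since `a|₁ = 1` and `b|₁ = a`, a generator read at `1` loses weight and one read at `0` keeps it.
def weight (R : List Bool) : ℕ := R.length + R.count false

theorem weight_append (R S : List Bool) : weight (R ++ S) = weight R + weight S := by
  simp only [weight, List.length_append, List.count_append]
  omega

theorem weight_cons (g : Bool) (R : List Bool) : weight (g :: R) = weight [g] + weight R :=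
  weight_append [g] R

theorem weight_wordSection_le (x : Bool) (R : List Bool) : weight (wordSection x R) ≤ weight R := by
  induction R generalizing x with
  | nil => rfl
  | cons g R ih =>
    have : weight (genSection x g) ≤ weight [g] := by cases x <;> cases g <;> decide
    rw [wordSection, weight_append, weight_cons]
    exact Nat.add_le_add this (ih _)

theorem weight_wordSection_lt (x : Bool) {R : List Bool} (h : 2 ≤ R.length) :
    weight (wordSection x R) < weight R := by
  obtain ⟨g, g', R, rfl⟩ : ∃ g g' R', R = g :: g' :: R' := by
    rcases R with _ | ⟨g, _ | ⟨g', R⟩⟩ <;> simp_all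
  have hsec (x y : Bool) : weight (genSection x y) ≤ weight [y] := by cases x <;> cases y <;> decide
  have hsec_lt (y : Bool) : weight (genSection true y) < weight [y] := by cases y <;> decide
  have hR := weight_wordSection_le
  rw [weight_cons g, weight_cons g' R]
  cases x <;> simp only [wordSection, Bool.not_false, Bool.not_true, weight_append]
  · have := hsec false g; have := hsec_lt g'; have := hR false R; omega
  · have := hsec_lt g; have := hsec false g'; have := hR true R; omega

theorem wordPerm_injective : Function.Injective wordPerm := by
  intro R₁ R₂ h
  induction hn : weight R₁ + weight R₂ using Nat.strong_induction_on generalizing R₁ R₂ with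
  | _ n ih =>
  by_cases hsmall : R₁.length ≤ 1 ∧ R₂.length ≤ 1
  · exact eq_of_wordPerm_eq_of_length_le_one hsmall.1 hsmall.2 h
  have hsec (x : Bool) : weight (wordSection x R₁) + weight (wordSection x R₂) < n := by
    have h₁ := weight_wordSection_le x R₁
    have h₂ := weight_wordSection_le x R₂
    rcases not_and_or.mp hsmall with hlong | hlong
    · have := weight_wordSection_lt x (not_le.mp hlong); omega
    · have := weight_wordSection_lt x (not_le.mp hlong); omega
  exact eq_of_wordSection_eq
    (ih _ (hsec false) (wordPerm_wordSection_eq_of_wordPerm_eq h false) rfl)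
    (ih _ (hsec true) (wordPerm_wordSection_eq_of_wordPerm_eq h true) rfl)

end Aut2851

open Aut2851 in
/-- In the group `G₂₈₅₁` generated by automaton 2851, the subsemigroup
generated by `a` and `b` is free of rank 2: distinct nonempty positive words
in `a` and `b` represent distinct elements.  In particular `G₂₈₅₁` has
exponential growth: the ball of radius `n` with respect to the generating set
`{a,b,c}` contains at least `2ⁿ` elements. -/
theorem automaton2851_free_subsemigroup_and_exponential_growth :
    (∀ L₁ L₂ : List Bool, L₁ ≠ [] → L₂ ≠ [] → L₁ ≠ L₂ →
      (L₁.map fun x => cond x a b).prod ≠ (L₂.map fun x => cond x a b).prod) ∧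
    (∀ n : ℕ, 2 ^ n ≤ Set.ncard {g : Equiv.Perm (List Bool) |
      ∃ L : List (Equiv.Perm (List Bool)),
        (∀ x ∈ L, x ∈ ({a, a⁻¹, b, b⁻¹, c, c⁻¹} : Set (Equiv.Perm (List Bool)))) ∧
        L.length ≤ n ∧ L.prod = g}) := by
  have hprod (L : List Bool) : (L.map fun x => cond x a b).prod = wordPerm L.reverse :=
    (wordPerm_reverse L).symm
  refine ⟨fun L₁ L₂ _ _ hne h => hne ?_, fun n => ?_⟩
  · rw [hprod, hprod] at h
    exact List.reverse_injective (wordPerm_injective h)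
  calc 2 ^ n = Nat.card (Fin n → Bool) := by simp
    _ = (Set.range fun v : Fin n → Bool => wordPerm (List.ofFn v)).ncard :=
      (Set.ncard_range_of_injective (wordPerm_injective.comp List.ofFn_injective)).symm
    _ ≤ _ := by
      refine Set.ncard_le_ncard ?_ ((Set.toFinite _).setOf_exists_prod_eq n)
      rintro _ ⟨v, rfl⟩
      refine ⟨(List.ofFn v).reverse.map gen, fun x hx => ?_, by simp, rfl⟩
      obtain ⟨y, -, rfl⟩ := List.mem_map.mp hx
      cases y <;> simp [gen]
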